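/- arXiv:1811.02733 — 2 statements merged into one kernel-verified Lean document; each statement's English description precedes it below -/
import Mathlib

section
/- For p = -1, the radial Zernike polynomials reduce to Legendre polynomials: R_{0,n}(|x|) = P_{2n}(x) and sgn(x)·R_{1,n}(|x|) = P_{2n+1}(x) for all -1 ≤ x ≤ 1 and nonnegative integers n, where P_k denotes the Legendre polynomial of degree k. -/
open scoped Nat

/-- Generalized binomial coefficient `C(a, m) = a(a-1)⋯(a-m+1)/m!` for real `a`. -/
noncomputable def genChoose (a : ℝ) (m : ℕ) : ℝ :=
  (∏ i ∈ Finset.range m, (a - i)) / (m ! : ℝ)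

/-- The radial Zernike polynomial `R_{N,n}` in dimension `p+2`. -/
noncomputable def zernikeR (p : ℝ) (N n : ℕ) (x : ℝ) : ℝ :=
  x ^ N * ∑ m ∈ Finset.range (n + 1),
    (-1 : ℝ) ^ m * genChoose (n + N + p / 2) m * (n.choose m : ℝ) *
      (x ^ 2) ^ (n - m) * (1 - x ^ 2) ^ m

/-- The Jacobi polynomial `P_n^{(α,0)}`, via the standard explicit formula. -/
noncomputable def jacobiP (n : ℕ) (α : ℝ) (x : ℝ) : ℝ :=
  ∑ s ∈ Finset.range (n + 1),
    genChoose (α + n) (n - s) * genChoose (n : ℝ) s * ((x - 1) / 2) ^ s * ((x + 1) / 2) ^ (n - s)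

/-- The Legendre polynomial of degree `k`, as the Jacobi polynomial `P_k^{(0,0)}`. -/
noncomputable def legendreP (k : ℕ) (x : ℝ) : ℝ := jacobiP k 0 x

lemma gc_zero (a : ℝ) : genChoose a 0 = 1 := by simp [genChoose]

lemma gc_shift (a : ℝ) (m : ℕ) :
    genChoose (a + 1) (m + 1) * (m + 1) = (a + 1) * genChoose a m := by
  unfold genChoose
  rw [Finset.prod_range_succ']
  have : ∀ i ∈ Finset.range m, (a + 1 - (↑(i + 1)) : ℝ) = a - i := by
    intro i _; push_cast; ring
  rw [Finset.prod_congr rfl this]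
  rw [Nat.factorial_succ]
  push_cast
  have h1 : ((m:ℝ)+1) ≠ 0 := by positivity
  have h2 : ((m ! : ℕ):ℝ) ≠ 0 := by exact_mod_cast (Nat.factorial_pos m).ne'
  field_simp
  ring

-- real-valued choose ratio lemmas, unconditional
lemma choose_r1 (m k : ℕ) :
    ((k:ℝ) + 1) * ((m.choose (k+1) : ℕ) : ℝ) = ((m:ℝ) - k) * (m.choose k : ℝ) := by
  rcases le_or_gt (k+1) m with h | h
  · have := Nat.choose_succ_right_eq m k
    have hc : ((m.choose (k+1) * (k+1) : ℕ) : ℝ) = ((m.choose k * (m - k) : ℕ) : ℝ) := by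
      rw [this]
    push_cast [Nat.cast_sub (by omega : k ≤ m)] at hc
    linarith
  · rcases Nat.eq_or_lt_of_le (by omega : m ≤ k) with h2 | h2
    · subst h2
      simp [Nat.choose_succ_self]
    · rw [Nat.choose_eq_zero_of_lt (by omega), Nat.choose_eq_zero_of_lt (by omega)]
      simp

lemma choose_r2 (m k : ℕ) :
    ((m:ℝ) + 1 - k) * (((m+1).choose k : ℕ) : ℝ) = ((m:ℝ) + 1) * (m.choose k : ℝ) := by
  rcases le_or_gt k m with h | h
  · have := Nat.choose_mul_succ_eq m k
    have hc : ((m.choose k * (m+1) : ℕ) : ℝ) = (((m+1).choose k * (m + 1 - k) : ℕ) : ℝ) := by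
      rw [this]
    push_cast [Nat.cast_sub (by omega : k ≤ m + 1)] at hc
    linarith
  · rcases Nat.eq_or_lt_of_le (h : m.succ ≤ k) with h2 | h2
    · subst h2
      rw [Nat.choose_self, Nat.choose_succ_self]
      push_cast
      ring
    · rw [Nat.choose_eq_zero_of_lt (by omega), Nat.choose_eq_zero_of_lt (by omega)]
      simp

-- (m+1) * C(m,k)  = (k+1) * C(m+1, k+1)
lemma choose_r3 (m k : ℕ) :
    ((m:ℝ) + 1) * (m.choose k : ℝ) = ((k:ℝ) + 1) * (((m+1).choose (k+1) : ℕ) : ℝ) := by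
  have := Nat.add_one_mul_choose_eq m k
  have hc : (((m+1) * m.choose k : ℕ) : ℝ) = (((m+1).choose (k+1) * (k+1) : ℕ) : ℝ) := by
    exact_mod_cast this
  push_cast at hc
  linarith

lemma gc_succ (a : ℝ) (m : ℕ) :
    genChoose a (m + 1) * (m + 1) = genChoose a m * (a - m) := by
  unfold genChoose
  rw [Finset.prod_range_succ, Nat.factorial_succ]
  have h2 : ((m ! : ℕ):ℝ) ≠ 0 := by exact_mod_cast (Nat.factorial_pos m).ne'
  push_cast
  field_simp

lemma gc_nat (n k : ℕ) : genChoose (n : ℝ) k = (n.choose k : ℝ) := by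
  induction k with
  | zero => rw [gc_zero, Nat.choose_zero_right, Nat.cast_one]
  | succ k ih =>
    have h := gc_succ (n : ℝ) k
    rw [ih] at h
    have hr := choose_r1 n k
    have hk : ((k:ℝ) + 1) ≠ 0 := by positivity
    have key : genChoose (n:ℝ) (k+1) * ((k:ℝ)+1) = (n.choose (k+1) : ℝ) * ((k:ℝ)+1) := by
      rw [h]; linarith
    exact mul_right_cancel₀ hk key

lemma gc_pascal (a : ℝ) (k : ℕ) :
    genChoose (a + 1) (k + 1) = genChoose a (k + 1) + genChoose a k := by
  have h1 := gc_shift a k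
  have h2 := gc_succ a k
  have hk : ((k:ℝ) + 1) ≠ 0 := by positivity
  have key : genChoose (a+1) (k+1) * ((k:ℝ)+1) = (genChoose a (k+1) + genChoose a k) * ((k:ℝ)+1) := by
    rw [h1]
    linear_combination -h2
  exact mul_right_cancel₀ hk key

/-- Vandermonde with one natural argument. -/
lemma gc_vandermonde (a : ℝ) (b : ℕ) : ∀ K : ℕ,
    ∑ j ∈ Finset.range (K + 1), genChoose a j * ((b.choose (K - j) : ℕ) : ℝ)
      = genChoose (a + b) K := by
  induction b with
  | zero =>
    intro K
    rw [Finset.sum_eq_single K]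
    · simp [Nat.choose_self]
    · intro j hj hne
      have hj' : j < K := by
        have := Finset.mem_range.mp hj; omega
      rw [Nat.choose_eq_zero_of_lt (by omega)]
      simp
    · intro h; exact absurd (Finset.self_mem_range_succ K) h
  | succ b ih =>
    intro K
    induction K with
    | zero => simp [gc_zero]
    | succ K _ =>
      have split : ∀ j ∈ Finset.range (K + 1),
          genChoose a j * (((b+1).choose (K + 1 - j) : ℕ) : ℝ)
            = genChoose a j * ((b.choose (K + 1 - j) : ℕ) : ℝ)
              + genChoose a j * ((b.choose (K - j) : ℕ) : ℝ) := by
        intro j hj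
        have hj' : j ≤ K := by have := Finset.mem_range.mp hj; omega
        have hKj : K + 1 - j = (K - j) + 1 := by omega
        rw [hKj, Nat.choose_succ_succ]
        push_cast
        ring
      rw [Finset.sum_range_succ, Finset.sum_congr rfl split, Finset.sum_add_distrib]
      have e1 : ∑ j ∈ Finset.range (K + 1), genChoose a j * ((b.choose (K + 1 - j) : ℕ) : ℝ)
          + genChoose a (K+1) = genChoose (a + b) (K+1) := by
        have h := ih (K+1)
        rw [Finset.sum_range_succ] at h
        simpa using h
      have e2 := ih K
      simp only [Nat.sub_self, Nat.choose_zero_right, Nat.cast_one, mul_one]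
      push_cast
      rw [show a + ((b:ℝ)+1) = (a + (b:ℝ)) + 1 by ring, gc_pascal]
      linarith

-- triangle reshape
lemma tri (N : ℕ) (f : ℕ → ℕ → ℝ) :
    ∑ s ∈ Finset.range (N+1), ∑ t ∈ Finset.Icc s N, f s t
      = ∑ t ∈ Finset.range (N+1), ∑ s ∈ Finset.range (t+1), f s t := by
  have h1 : ∀ s, s ∈ Finset.range (N+1) →
      ∑ t ∈ Finset.Icc s N, f s t
        = ∑ t ∈ Finset.range (N+1), if s ≤ t then f s t else 0 := by
    intro s _
    rw [← Finset.sum_filter]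
    congr 1
    ext t
    simp [Nat.lt_succ_iff]
    omega
  rw [Finset.sum_congr rfl h1, Finset.sum_comm]
  apply Finset.sum_congr rfl
  intro t ht
  have ht' : t ≤ N := Nat.lt_succ_iff.mp (Finset.mem_range.mp ht)
  rw [← Finset.sum_filter]
  congr 1
  ext s
  simp [Nat.lt_succ_iff]
  omega

-- Icc to range
lemma icc_shift (a b : ℕ) (f : ℕ → ℝ) (h : a ≤ b) :
    ∑ k ∈ Finset.range (b + 1 - a), f (a + k) = ∑ t ∈ Finset.Icc a b, f t := by
  apply Finset.sum_nbij' (i := fun k => a + k) (j := fun t => t - a)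
  · intro k hk
    simp only [Finset.mem_range] at hk
    simp only [Finset.mem_Icc]
    omega
  · intro t htt
    simp only [Finset.mem_Icc] at htt
    simp only [Finset.mem_range]
    omega
  · intro k hk
    simp only [Finset.mem_range] at hk
    omega
  · intro t htt
    simp only [Finset.mem_Icc] at htt
    omega
  · intro k _
    rfl

-- box reshape
lemma box (n : ℕ) (f : ℕ → ℕ → ℝ) :
    ∑ m ∈ Finset.range (n+1), ∑ k ∈ Finset.range (m+2), f m (m+k)
      = ∑ t ∈ Finset.range (2*n+2), ∑ m ∈ Finset.range (n+1),
          (if m ≤ t ∧ t ≤ 2*m+1 then f m t else 0) := by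
  have h1 : ∀ m, m ∈ Finset.range (n+1) →
      ∑ k ∈ Finset.range (m+2), f m (m+k)
        = ∑ t ∈ Finset.range (2*n+2), if m ≤ t ∧ t ≤ 2*m+1 then f m t else 0 := by
    intro m hm
    have hm' : m ≤ n := Nat.lt_succ_iff.mp (Finset.mem_range.mp hm)
    have e1 : ∑ k ∈ Finset.range (m+2), f m (m+k)
        = ∑ t ∈ Finset.Icc m (2*m+1), f m t := by
      have := icc_shift m (2*m+1) (fun t => f m t) (by omega)
      rw [show 2*m+1+1-m = m+2 by omega] at this
      exact this
    rw [e1, ← Finset.sum_filter]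
    congr 1
    ext t
    simp [Nat.lt_succ_iff]
    omega
  rw [Finset.sum_congr rfl h1, Finset.sum_comm]

noncomputable def Fe (n t m : ℕ) : ℝ :=
  (if m ≤ t then ((m.choose (t-m) : ℕ) : ℝ) else 0)
    * (4^m * (n.choose m : ℝ) * genChoose ((n:ℝ) + m - 1/2) m)

lemma Fe_step (n t m : ℕ) :
    ((t:ℝ)+1)^2 * Fe n (t+1) m - (2*(n:ℝ)-(t:ℝ))*(2*(n:ℝ)+(t:ℝ)+1) * Fe n t m
      = ((m:ℝ)+1)*((t:ℝ)+1-2*((m:ℝ)+1)) * Fe n (t+1) (m+1)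
        - (m:ℝ)*((t:ℝ)+1-2*(m:ℝ)) * Fe n (t+1) m := by
  rcases le_or_gt m t with h | h
  · obtain ⟨d, rfl⟩ := Nat.exists_eq_add_of_le h
    unfold Fe
    rw [if_pos (by omega : m ≤ m + d), if_pos (by omega : m ≤ m + d + 1),
        if_pos (by omega : m + 1 ≤ m + d + 1),
        show m + d - m = d by omega, show m + d + 1 - m = d + 1 by omega,
        show m + d + 1 - (m + 1) = d by omega]
    rcases le_or_gt d m with hdm | hdm
    · have hc1 : ((m.choose (d+1) : ℕ) : ℝ) = ((m:ℝ)-(d:ℝ)) * (m.choose d : ℝ) / ((d:ℝ)+1) := by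
        rw [eq_div_iff (by positivity)]
        linarith [choose_r1 m d]
      have hc2 : (((m+1).choose d : ℕ) : ℝ)
          = ((m:ℝ)+1) * (m.choose d : ℝ) / ((m:ℝ)+1-(d:ℝ)) := by
        rw [eq_div_iff (by
          have : (d:ℝ) ≤ (m:ℝ) := by exact_mod_cast hdm
          linarith)]
        linarith [choose_r2 m d]
      have hc3 : ((n.choose (m+1) : ℕ) : ℝ) = ((n:ℝ)-(m:ℝ)) * (n.choose m : ℝ) / ((m:ℝ)+1) := by
        rw [eq_div_iff (by positivity)]
        linarith [choose_r1 n m]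
      have hg : genChoose ((n:ℝ) + ((m+1 : ℕ) : ℝ) - 1/2) (m+1)
          = ((n:ℝ)+(m:ℝ)+1/2) * genChoose ((n:ℝ)+(m:ℝ)-1/2) m / ((m:ℝ)+1) := by
        rw [eq_div_iff (by positivity)]
        have h4 := gc_shift ((n:ℝ)+(m:ℝ)-1/2) m
        have harg : (n:ℝ) + ((m+1 : ℕ) : ℝ) - 1/2 = ((n:ℝ)+(m:ℝ)-1/2) + 1 := by
          push_cast; ring
        rw [harg, h4]
        ring
      rw [hc1, hc2, hc3, hg]
      have hd1 : ((d:ℝ)+1) ≠ 0 := by positivity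
      have hm1 : ((m:ℝ)+1) ≠ 0 := by positivity
      have hmd : ((m:ℝ)+1-(d:ℝ)) ≠ 0 := by
        have : (d:ℝ) ≤ (m:ℝ) := by exact_mod_cast hdm
        linarith
      field_simp
      push_cast
      ring
    · have hz0 : ((m.choose d : ℕ) : ℝ) = 0 := by
        rw [Nat.choose_eq_zero_of_lt hdm]; simp
      have hz1 : ((m.choose (d+1) : ℕ) : ℝ) = 0 := by
        rw [Nat.choose_eq_zero_of_lt (by omega)]; simp
      rcases Nat.eq_or_lt_of_le (by omega : m + 1 ≤ d) with h2 | h2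
      · rw [hz0, hz1, ← h2]
        push_cast
        ring
      · have hz2 : (((m+1).choose d : ℕ) : ℝ) = 0 := by
          rw [Nat.choose_eq_zero_of_lt (by omega)]; simp
        rw [hz0, hz1, hz2]
        push_cast
        ring
  · rcases Nat.eq_or_lt_of_le (by omega : t + 1 ≤ m) with h2 | h2
    · -- m = t + 1
      unfold Fe
      rw [← h2]
      rw [if_neg (show ¬(t+1 ≤ t) by omega), if_pos (show t+1 ≤ t+1 by omega),
          if_neg (show ¬(t+1+1 ≤ t+1) by omega), Nat.sub_self, Nat.choose_zero_right]
      push_cast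
      ring
    · unfold Fe
      rw [if_neg (show ¬(m ≤ t) by omega), if_neg (show ¬(m ≤ t+1) by omega),
          if_neg (show ¬(m+1 ≤ t+1) by omega)]
      push_cast
      ring

lemma Fe_top (n t : ℕ) : Fe n t (n+1) = 0 := by
  unfold Fe
  rw [Nat.choose_succ_self]
  push_cast
  ring

lemma star_even (n : ℕ) : ∀ t : ℕ,
    ∑ m ∈ Finset.range (n+1), Fe n t m
      = (((2*n).choose t : ℕ) : ℝ) * (((2*n+t).choose t : ℕ) : ℝ) := by
  intro t
  induction t with
  | zero =>
    rw [Finset.sum_eq_single 0]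
    · unfold Fe
      rw [if_pos (le_refl 0)]
      simp [gc_zero]
    · intro m _ hm
      unfold Fe
      rw [if_neg (by omega)]
      ring
    · intro hc; exact absurd (Finset.mem_range.mpr (by omega)) hc
  | succ t ih =>
    have ih' := ih
    -- telescoping
    have htel : ∑ m ∈ Finset.range (n+1),
        (((t:ℝ)+1)^2 * Fe n (t+1) m - (2*(n:ℝ)-(t:ℝ))*(2*(n:ℝ)+(t:ℝ)+1) * Fe n t m) = 0 := by
      have : ∀ m ∈ Finset.range (n+1),
          ((t:ℝ)+1)^2 * Fe n (t+1) m - (2*(n:ℝ)-(t:ℝ))*(2*(n:ℝ)+(t:ℝ)+1) * Fe n t m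
            = (fun i : ℕ => (i:ℝ)*((t:ℝ)+1-2*(i:ℝ)) * Fe n (t+1) i) (m+1)
              - (fun i : ℕ => (i:ℝ)*((t:ℝ)+1-2*(i:ℝ)) * Fe n (t+1) i) m := by
        intro m _
        have := Fe_step n t m
        simp only []
        push_cast
        linarith [Fe_step n t m]
      rw [Finset.sum_congr rfl this, Finset.sum_range_sub
        (f := fun i : ℕ => (i:ℝ)*((t:ℝ)+1-2*(i:ℝ)) * Fe n (t+1) i)]
      simp [Fe_top]
    rw [Finset.sum_sub_distrib, ← Finset.mul_sum, ← Finset.mul_sum, sub_eq_zero] at htel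
    rw [ih'] at htel
    -- now divide
    have hA : (((t:ℝ)+1)^2) ≠ 0 := by positivity
    have key : ((t:ℝ)+1)^2 * ∑ m ∈ Finset.range (n+1), Fe n (t+1) m
        = ((t:ℝ)+1)^2 * ((((2*n).choose (t+1) : ℕ) : ℝ) * (((2*n+(t+1)).choose (t+1) : ℕ) : ℝ)) := by
      rw [htel]
      have e1 := choose_r1 (2*n) t
      have e2 := choose_r3 (2*n+t) t
      have harg : 2*n + (t+1) = (2*n+t)+1 := by omega
      rw [harg]
      push_cast at e1 e2 ⊢
      linear_combination (-((t:ℝ)+1) * (((2*n+t+1).choose (t+1) : ℕ) : ℝ)) * e1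
        + ((2*(n:ℝ)-(t:ℝ)) * (((2*n).choose t : ℕ) : ℝ)) * e2
    exact mul_left_cancel₀ hA key

noncomputable def Fo (n t m : ℕ) : ℝ :=
  ((if m ≤ t then ((m.choose (t-m) : ℕ) : ℝ) else 0)
    + 2 * (if m+1 ≤ t then ((m.choose (t-m-1) : ℕ) : ℝ) else 0))
    * (4^m * (n.choose m : ℝ) * genChoose ((n:ℝ) + m + 1/2) m)

lemma Fo_step (n t m : ℕ) :
    ((t:ℝ)+2) * (((t:ℝ)+1)^2 * Fo n (t+1) m
      - (2*(n:ℝ)+1-(t:ℝ))*(2*(n:ℝ)+2+(t:ℝ)) * Fo n t m)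
      = ((m:ℝ)+1)*((t:ℝ)-2*((m:ℝ)+1))*((t:ℝ)+1) * Fo n (t+1) (m+1)
        - (m:ℝ)*((t:ℝ)-2*(m:ℝ))*((t:ℝ)+1) * Fo n (t+1) m := by
  have hgO : genChoose ((n:ℝ) + ((m+1 : ℕ) : ℝ) + 1/2) (m+1)
      = ((n:ℝ)+(m:ℝ)+3/2) * genChoose ((n:ℝ)+(m:ℝ)+1/2) m / ((m:ℝ)+1) := by
    rw [eq_div_iff (by positivity)]
    have h4 := gc_shift ((n:ℝ)+(m:ℝ)+1/2) m
    have harg : (n:ℝ) + ((m+1 : ℕ) : ℝ) + 1/2 = ((n:ℝ)+(m:ℝ)+1/2) + 1 := by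
      push_cast; ring
    rw [harg, h4]
    ring
  have hcE : ((n.choose (m+1) : ℕ) : ℝ) = ((n:ℝ)-(m:ℝ)) * (n.choose m : ℝ) / ((m:ℝ)+1) := by
    rw [eq_div_iff (by positivity)]
    linarith [choose_r1 n m]
  rcases le_or_gt (m+1) t with h | h
  · obtain ⟨d, hd⟩ := Nat.exists_eq_add_of_le h
    subst hd
    unfold Fo
    rw [if_pos (show m ≤ m+1+d by omega), if_pos (show m+1 ≤ m+1+d by omega),
        if_pos (show m ≤ m+1+d+1 by omega), if_pos (show m+1 ≤ m+1+d+1 by omega),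
        if_pos (show m+1 ≤ m+1+d+1 by omega), if_pos (show m+1+1 ≤ m+1+d+1 by omega),
        show m+1+d - m - 1 = d by omega, show m+1+d - m = d+1 by omega,
        show m+1+d+1 - m - 1 = d+1 by omega, show m+1+d+1 - m = d+2 by omega,
        show m+1+d+1 - (m+1) - 1 = d by omega, show m+1+d+1 - (m+1) = d+1 by omega]
    rcases le_or_gt d m with hdm | hdm
    · have hmd : ((m:ℝ)+1-(d:ℝ)) ≠ 0 := by
        have : (d:ℝ) ≤ (m:ℝ) := by exact_mod_cast hdm
        linarith
      have hcB : ((m.choose (d+2) : ℕ) : ℝ)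
          = ((m:ℝ)-(d:ℝ)-1) * (m.choose (d+1) : ℝ) / ((d:ℝ)+2) := by
        rw [eq_div_iff (by positivity)]
        have := choose_r1 m (d+1)
        push_cast at this
        rw [show d+1+1 = d+2 by omega] at this
        linarith
      have hcA : ((m.choose (d+1) : ℕ) : ℝ) = ((m:ℝ)-(d:ℝ)) * (m.choose d : ℝ) / ((d:ℝ)+1) := by
        rw [eq_div_iff (by positivity)]
        linarith [choose_r1 m d]
      have hcC : (((m+1).choose d : ℕ) : ℝ)
          = ((m:ℝ)+1) * (m.choose d : ℝ) / ((m:ℝ)+1-(d:ℝ)) := by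
        rw [eq_div_iff hmd]
        linarith [choose_r2 m d]
      have hcD : (((m+1).choose (d+1) : ℕ) : ℝ) = ((m:ℝ)+1) * (m.choose d : ℝ) / ((d:ℝ)+1) := by
        rw [eq_div_iff (by positivity)]
        linarith [choose_r3 m d]
      rw [hcB, hcA, hcC, hcD, hcE, hgO]
      field_simp
      push_cast
      ring
    · have hz0 : ((m.choose d : ℕ) : ℝ) = 0 := by
        rw [Nat.choose_eq_zero_of_lt hdm]; simp
      have hz1 : ((m.choose (d+1) : ℕ) : ℝ) = 0 := by
        rw [Nat.choose_eq_zero_of_lt (by omega)]; simp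
      have hz2 : ((m.choose (d+2) : ℕ) : ℝ) = 0 := by
        rw [Nat.choose_eq_zero_of_lt (by omega)]; simp
      have hz3 : (((m+1).choose (d+1) : ℕ) : ℝ) = 0 := by
        rw [Nat.choose_eq_zero_of_lt (by omega)]; simp
      rcases Nat.eq_or_lt_of_le (by omega : m + 1 ≤ d) with h2 | h2
      · rw [hz0, hz1, hz2, hz3, ← h2]
        push_cast
        ring
      · have hz4 : (((m+1).choose d : ℕ) : ℝ) = 0 := by
          rw [Nat.choose_eq_zero_of_lt (by omega)]; simp
        rw [hz0, hz1, hz2, hz3, hz4]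
        push_cast
        ring
  · rcases Nat.eq_or_lt_of_le (by omega : t ≤ m) with h2 | h2
    · -- m = t
      unfold Fo
      rw [h2]
      rw [if_pos (le_refl m), if_neg (show ¬(m+1 ≤ m) by omega),
          if_pos (show m ≤ m+1 by omega), if_pos (show m+1 ≤ m+1 by omega),
          if_pos (show m+1 ≤ m+1 by omega), if_neg (show ¬(m+1+1 ≤ m+1) by omega),
          Nat.sub_self, show m+1-m-1 = 0 by omega, show m+1-m = 1 by omega,
          show m+1-(m+1) = 0 by omega,
          Nat.choose_zero_right, Nat.choose_zero_right, Nat.choose_one_right]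
      rw [hcE, hgO]
      field_simp
      push_cast
      ring
    · rcases Nat.eq_or_lt_of_le (by omega : t + 1 ≤ m) with h3 | h3
      · -- m = t+1
        unfold Fo
        rw [← h3]
        rw [if_neg (show ¬(t+1 ≤ t) by omega), if_neg (show ¬(t+1+1 ≤ t) by omega),
            if_pos (show t+1 ≤ t+1 by omega), if_neg (show ¬(t+1+1 ≤ t+1) by omega),
            if_neg (show ¬(t+1+1 ≤ t+1) by omega), if_neg (show ¬(t+1+1+1 ≤ t+1) by omega),
            Nat.sub_self, Nat.choose_zero_right]
        push_cast
        ring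
      · unfold Fo
        rw [if_neg (show ¬(m ≤ t) by omega), if_neg (show ¬(m+1 ≤ t) by omega),
            if_neg (show ¬(m ≤ t+1) by omega), if_neg (show ¬(m+1 ≤ t+1) by omega),
            if_neg (show ¬(m+1 ≤ t+1) by omega), if_neg (show ¬(m+1+1 ≤ t+1) by omega)]
        push_cast
        ring

lemma Fo_top (n t : ℕ) : Fo n t (n+1) = 0 := by
  unfold Fo
  rw [Nat.choose_succ_self]
  push_cast
  ring

lemma star_odd (n : ℕ) : ∀ t : ℕ,
    ∑ m ∈ Finset.range (n+1), Fo n t m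
      = (((2*n+1).choose t : ℕ) : ℝ) * (((2*n+1+t).choose t : ℕ) : ℝ) := by
  intro t
  induction t with
  | zero =>
    rw [Finset.sum_eq_single 0]
    · unfold Fo
      rw [if_pos (le_refl 0), if_neg (by omega)]
      simp [gc_zero]
    · intro m _ hm
      unfold Fo
      rw [if_neg (by omega), if_neg (by omega)]
      ring
    · intro hc; exact absurd (Finset.mem_range.mpr (by omega)) hc
  | succ t ih =>
    have ih' := ih
    have htel : ∑ m ∈ Finset.range (n+1),
        (((t:ℝ)+2) * (((t:ℝ)+1)^2 * Fo n (t+1) m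
          - (2*(n:ℝ)+1-(t:ℝ))*(2*(n:ℝ)+2+(t:ℝ)) * Fo n t m)) = 0 := by
      have : ∀ m ∈ Finset.range (n+1),
          ((t:ℝ)+2) * (((t:ℝ)+1)^2 * Fo n (t+1) m
            - (2*(n:ℝ)+1-(t:ℝ))*(2*(n:ℝ)+2+(t:ℝ)) * Fo n t m)
            = (fun i : ℕ => (i:ℝ)*((t:ℝ)-2*(i:ℝ))*((t:ℝ)+1) * Fo n (t+1) i) (m+1)
              - (fun i : ℕ => (i:ℝ)*((t:ℝ)-2*(i:ℝ))*((t:ℝ)+1) * Fo n (t+1) i) m := by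
        intro m _
        simp only []
        push_cast
        linarith [Fo_step n t m]
      rw [Finset.sum_congr rfl this, Finset.sum_range_sub
        (f := fun i : ℕ => (i:ℝ)*((t:ℝ)-2*(i:ℝ))*((t:ℝ)+1) * Fo n (t+1) i)]
      simp [Fo_top]
    have ht2 : ((t:ℝ)+2) ≠ 0 := by positivity
    rw [← Finset.mul_sum, mul_eq_zero] at htel
    rcases htel with hbad | htel
    · exact absurd hbad ht2
    rw [Finset.sum_sub_distrib, ← Finset.mul_sum, ← Finset.mul_sum, sub_eq_zero, ih'] at htel
    have hA : (((t:ℝ)+1)^2) ≠ 0 := by positivity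
    have key : ((t:ℝ)+1)^2 * ∑ m ∈ Finset.range (n+1), Fo n (t+1) m
        = ((t:ℝ)+1)^2 * ((((2*n+1).choose (t+1) : ℕ) : ℝ)
            * (((2*n+1+(t+1)).choose (t+1) : ℕ) : ℝ)) := by
      rw [htel]
      have e1 := choose_r1 (2*n+1) t
      have e2 := choose_r3 (2*n+1+t) t
      have harg : 2*n+1 + (t+1) = (2*n+1+t)+1 := by omega
      rw [harg]
      push_cast at e1 e2 ⊢
      linear_combination (-((t:ℝ)+1) * (((2*n+1+t+1).choose (t+1) : ℕ) : ℝ)) * e1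
        + ((2*(n:ℝ)+1-(t:ℝ)) * (((2*n+1).choose t : ℕ) : ℝ)) * e2
    exact mul_left_cancel₀ hA key

-- Nat inner identity
lemma inner_nat (N t : ℕ) (h : t ≤ N) :
    ∑ s ∈ Finset.range (t+1), N.choose s * N.choose s * (N-s).choose (t-s)
      = N.choose t * (N+t).choose t := by
  have step : ∀ s ∈ Finset.range (t+1),
      N.choose s * N.choose s * (N-s).choose (t-s)
        = N.choose t * (N.choose s * t.choose s) := by
    intro s hs
    have hs' : s ≤ t := Nat.lt_succ_iff.mp (Finset.mem_range.mp hs)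
    have := Nat.choose_mul (n := N) hs'  -- N.choose t * t.choose s = N.choose s * (N-s).choose (t-s)
    calc N.choose s * N.choose s * (N-s).choose (t-s)
        = N.choose s * (N.choose s * (N-s).choose (t-s)) := by ring
      _ = N.choose s * (N.choose t * t.choose s) := by rw [← this]
      _ = N.choose t * (N.choose s * t.choose s) := by ring
  rw [Finset.sum_congr rfl step, ← Finset.mul_sum]
  congr 1
  have vdm := Nat.add_choose_eq N t t
  rw [Finset.Nat.sum_antidiagonal_eq_sum_range_succ_mk] at vdm
  rw [vdm]
  apply Finset.sum_congr rfl
  intro s hs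
  have hs' : s ≤ t := Nat.lt_succ_iff.mp (Finset.mem_range.mp hs)
  rw [Nat.choose_symm hs']

lemma legendre_expand (N : ℕ) (x : ℝ) :
    legendreP N x = ∑ t ∈ Finset.range (N+1),
      ((N.choose t : ℕ) : ℝ) * (((N+t).choose t : ℕ) : ℝ) * ((x-1)/2)^t := by
  set w : ℝ := (x-1)/2 with hw
  have hx1 : (x+1)/2 = w + 1 := by rw [hw]; ring
  unfold legendreP jacobiP
  have e1 : ∀ s ∈ Finset.range (N+1),
      genChoose (0 + (N:ℝ)) (N - s) * genChoose (N : ℝ) s * ((x - 1) / 2) ^ s * ((x + 1) / 2) ^ (N - s)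
        = ∑ t ∈ Finset.Icc s N,
            ((N.choose s : ℕ) : ℝ) * ((N.choose s : ℕ) : ℝ) * (((N-s).choose (t-s) : ℕ) : ℝ) * w^t := by
    intro s hs
    have hs' : s ≤ N := Nat.lt_succ_iff.mp (Finset.mem_range.mp hs)
    rw [zero_add, gc_nat, gc_nat, Nat.choose_symm hs', hx1, ← hw]
    rw [add_pow]
    rw [Finset.mul_sum]
    rw [← icc_shift s N _ hs']
    rw [show N + 1 - s = N - s + 1 by omega]
    apply Finset.sum_congr rfl
    intro r _
    rw [show s + r - s = r by omega]
    simp only [one_pow, mul_one]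
    ring
  rw [Finset.sum_congr rfl e1, tri]
  apply Finset.sum_congr rfl
  intro t ht
  have ht' : t ≤ N := Nat.lt_succ_iff.mp (Finset.mem_range.mp ht)
  have : ∑ s ∈ Finset.range (t+1),
      ((N.choose s : ℕ) : ℝ) * ((N.choose s : ℕ) : ℝ) * (((N-s).choose (t-s) : ℕ) : ℝ) * w^t
      = (∑ s ∈ Finset.range (t+1),
          ((N.choose s * N.choose s * ((N-s).choose (t-s)) : ℕ) : ℝ)) * w^t := by
    rw [Finset.sum_mul]
    apply Finset.sum_congr rfl
    intro s _
    push_cast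
    ring
  rw [this, ← Nat.cast_sum, Finset.sum_congr rfl (fun s _ => rfl), inner_nat N t ht']
  push_cast
  ring

lemma zern_inner (n : ℕ) (a : ℝ) (q : ℝ) :
    ∑ m ∈ Finset.range (n+1), genChoose a m * ((n.choose m : ℕ) : ℝ) * (q+1)^(n-m) * q^m
      = ∑ t ∈ Finset.range (n+1), ((n.choose t : ℕ) : ℝ) * genChoose (a + t) t * q^t := by
  have e1 : ∀ m ∈ Finset.range (n+1),
      genChoose a m * ((n.choose m : ℕ) : ℝ) * (q+1)^(n-m) * q^m
        = ∑ t ∈ Finset.Icc m n,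
            genChoose a m * ((n.choose m : ℕ) : ℝ) * (((n-m).choose (t-m) : ℕ) : ℝ) * q^t := by
    intro m hm
    have hm' : m ≤ n := Nat.lt_succ_iff.mp (Finset.mem_range.mp hm)
    rw [add_pow, Finset.mul_sum, Finset.sum_mul, ← icc_shift m n _ hm',
        show n + 1 - m = n - m + 1 by omega]
    apply Finset.sum_congr rfl
    intro r _
    rw [show m + r - m = r by omega, pow_add]
    simp only [one_pow, mul_one]
    ring
  rw [Finset.sum_congr rfl e1, tri]
  apply Finset.sum_congr rfl
  intro t ht
  have ht' : t ≤ n := Nat.lt_succ_iff.mp (Finset.mem_range.mp ht)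
  have e2 : ∀ m ∈ Finset.range (t+1),
      genChoose a m * ((n.choose m : ℕ) : ℝ) * (((n-m).choose (t-m) : ℕ) : ℝ) * q^t
        = ((n.choose t : ℕ) : ℝ) * (genChoose a m * ((t.choose (t-m) : ℕ) : ℝ)) * q^t := by
    intro m hm
    have hm' : m ≤ t := Nat.lt_succ_iff.mp (Finset.mem_range.mp hm)
    have htr := Nat.choose_mul (n := n) hm'
    have hcast : ((n.choose m : ℕ) : ℝ) * (((n-m).choose (t-m) : ℕ) : ℝ)
        = ((n.choose t : ℕ) : ℝ) * ((t.choose m : ℕ) : ℝ) := by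
      rw [← Nat.cast_mul, ← Nat.cast_mul, ← htr]
    rw [Nat.choose_symm hm']
    calc genChoose a m * ((n.choose m : ℕ) : ℝ) * (((n-m).choose (t-m) : ℕ) : ℝ) * q^t
        = genChoose a m * (((n.choose m : ℕ) : ℝ) * (((n-m).choose (t-m) : ℕ) : ℝ)) * q^t := by ring
      _ = genChoose a m * (((n.choose t : ℕ) : ℝ) * ((t.choose m : ℕ) : ℝ)) * q^t := by rw [hcast]
      _ = ((n.choose t : ℕ) : ℝ) * (genChoose a m * ((t.choose m : ℕ) : ℝ)) * q^t := by ring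
  rw [Finset.sum_congr rfl e2, ← Finset.sum_mul, ← Finset.mul_sum, gc_vandermonde a t t]

lemma real_sign_mul_abs (x : ℝ) : Real.sign x * |x| = x := by
  rcases lt_trichotomy x 0 with h | h | h
  · rw [Real.sign_of_neg h, abs_of_neg h]; ring
  · rw [h]; simp
  · rw [Real.sign_of_pos h, abs_of_pos h]; ring

lemma zern_even_expand (n : ℕ) (x : ℝ) :
    zernikeR (-1) 0 n |x|
      = ∑ t ∈ Finset.range (n+1),
          ((n.choose t : ℕ) : ℝ) * genChoose ((n:ℝ) + t - 1/2) t * (x^2-1)^t := by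
  unfold zernikeR
  rw [pow_zero, one_mul]
  have e : ∀ m ∈ Finset.range (n+1),
      (-1 : ℝ) ^ m * genChoose ((n:ℝ) + ((0:ℕ):ℝ) + (-1)/2) m * (n.choose m : ℝ) *
        (|x| ^ 2) ^ (n - m) * (1 - |x| ^ 2) ^ m
        = genChoose ((n:ℝ) - 1/2) m * ((n.choose m : ℕ) : ℝ) * ((x^2-1)+1)^(n-m) * (x^2-1)^m := by
    intro m _
    have harg : ((n:ℝ) + ((0:ℕ):ℝ) + (-1)/2) = (n:ℝ) - 1/2 := by push_cast; ring
    rw [harg, sq_abs]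
    have hsg : (x^2-1)^m = (-1 : ℝ)^m * (1-x^2)^m := by
      rw [← mul_pow]
      congr 1
      ring
    rw [hsg, show (x^2-1)+1 = x^2 by ring]
    ring
  rw [Finset.sum_congr rfl e, zern_inner]
  apply Finset.sum_congr rfl
  intro t _
  rw [show (n:ℝ) - 1/2 + (t:ℝ) = (n:ℝ) + t - 1/2 by ring]

lemma zern_odd_expand (n : ℕ) (x : ℝ) :
    Real.sign x * zernikeR (-1) 1 n |x|
      = x * ∑ t ∈ Finset.range (n+1),
          ((n.choose t : ℕ) : ℝ) * genChoose ((n:ℝ) + t + 1/2) t * (x^2-1)^t := by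
  unfold zernikeR
  rw [pow_one, ← mul_assoc, real_sign_mul_abs]
  congr 1
  have e : ∀ m ∈ Finset.range (n+1),
      (-1 : ℝ) ^ m * genChoose ((n:ℝ) + ((1:ℕ):ℝ) + (-1)/2) m * (n.choose m : ℝ) *
        (|x| ^ 2) ^ (n - m) * (1 - |x| ^ 2) ^ m
        = genChoose ((n:ℝ) + 1/2) m * ((n.choose m : ℕ) : ℝ) * ((x^2-1)+1)^(n-m) * (x^2-1)^m := by
    intro m _
    have harg : ((n:ℝ) + ((1:ℕ):ℝ) + (-1)/2) = (n:ℝ) + 1/2 := by push_cast; ring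
    rw [harg, sq_abs]
    have hsg : (x^2-1)^m = (-1 : ℝ)^m * (1-x^2)^m := by
      rw [← mul_pow]
      congr 1
      ring
    rw [hsg, show (x^2-1)+1 = x^2 by ring]
    ring
  rw [Finset.sum_congr rfl e, zern_inner]
  apply Finset.sum_congr rfl
  intro t _
  rw [show (n:ℝ) + 1/2 + (t:ℝ) = (n:ℝ) + t + 1/2 by ring]

lemma even_side (n : ℕ) (x : ℝ) :
    zernikeR (-1) 0 n |x| = legendreP (2*n) x := by
  rw [zern_even_expand, legendre_expand]
  set w : ℝ := (x-1)/2 with hw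
  have hq : x^2 - 1 = 4*(w*(w+1)) := by rw [hw]; ring
  set f : ℕ → ℕ → ℝ := fun m t' => (4:ℝ)^m * ((n.choose m : ℕ) : ℝ)
    * genChoose ((n:ℝ)+m-1/2) m * ((m.choose (t'-m) : ℕ) : ℝ) * w^t' with hf
  have step1 : ∀ t ∈ Finset.range (n+1),
      ((n.choose t : ℕ) : ℝ) * genChoose ((n:ℝ)+t-1/2) t * (x^2-1)^t
        = ∑ k ∈ Finset.range (t+2), f t (t+k) := by
    intro t _
    have hterm : ∀ k ∈ Finset.range (t+1),
        f t (t+k) = ((n.choose t : ℕ) : ℝ) * genChoose ((n:ℝ)+t-1/2) t * (4:ℝ)^t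
          * (w^k * 1^(t-k) * ((t.choose k : ℕ) : ℝ)) * w^t := by
      intro k _
      rw [hf]
      simp only [show t+k-t = k by omega]
      rw [pow_add]
      simp only [one_pow]
      ring
    have hlast : f t (t+(t+1)) = 0 := by
      rw [hf]
      simp only [show t+(t+1)-t = t+1 by omega, Nat.choose_succ_self]
      push_cast
      ring
    rw [Finset.sum_range_succ, Finset.sum_congr rfl hterm, hlast, add_zero,
        ← Finset.sum_mul, ← Finset.mul_sum, ← add_pow, hq, mul_pow, mul_pow]
    ring
  rw [Finset.sum_congr rfl step1, box n f]
  have step3 : ∀ t ∈ Finset.range (2*n+2),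
      ∑ m ∈ Finset.range (n+1), (if m ≤ t ∧ t ≤ 2*m+1 then f m t else 0)
        = (∑ m ∈ Finset.range (n+1), Fe n t m) * w^t := by
    intro t _
    rw [Finset.sum_mul]
    apply Finset.sum_congr rfl
    intro m _
    unfold Fe
    rw [hf]
    by_cases h1 : m ≤ t
    · by_cases h2 : t ≤ 2*m+1
      · rw [if_pos ⟨h1, h2⟩, if_pos h1]
        ring
      · rw [if_neg (by tauto), if_pos h1,
            Nat.choose_eq_zero_of_lt (show m < t - m by omega)]
        push_cast
        ring
    · rw [if_neg (by tauto), if_neg h1]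
      ring
  rw [Finset.sum_congr rfl step3]
  have step4 : ∀ t ∈ Finset.range (2*n+2),
      (∑ m ∈ Finset.range (n+1), Fe n t m) * w^t
        = (((2*n).choose t : ℕ) : ℝ) * (((2*n+t).choose t : ℕ) : ℝ) * w^t := by
    intro t _
    rw [star_even n t]
  rw [Finset.sum_congr rfl step4, Finset.sum_range_succ,
      Nat.choose_eq_zero_of_lt (show 2*n < 2*n+1 by omega)]
  push_cast
  ring

lemma binomial_w (t : ℕ) (y : ℝ) :
    ∑ k ∈ Finset.range (t+1), y^k * ((t.choose k : ℕ) : ℝ) = (y+1)^t := by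
  rw [add_pow]
  apply Finset.sum_congr rfl
  intro k _
  simp [one_pow]

lemma odd_side (n : ℕ) (x : ℝ) :
    Real.sign x * zernikeR (-1) 1 n |x| = legendreP (2*n+1) x := by
  rw [zern_odd_expand, legendre_expand]
  set w : ℝ := (x-1)/2 with hw
  have hq : x^2 - 1 = 4*(w*(w+1)) := by rw [hw]; ring
  have hx : x = 2*w+1 := by rw [hw]; ring
  set f : ℕ → ℕ → ℝ := fun m t' => (4:ℝ)^m * ((n.choose m : ℕ) : ℝ)
    * genChoose ((n:ℝ)+m+1/2) m
    * (((m.choose (t'-m) : ℕ) : ℝ) + 2 * (if m+1 ≤ t' then ((m.choose (t'-m-1) : ℕ) : ℝ) else 0))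
    * w^t' with hf
  rw [Finset.mul_sum]
  have step1 : ∀ t ∈ Finset.range (n+1),
      x * (((n.choose t : ℕ) : ℝ) * genChoose ((n:ℝ)+t+1/2) t * (x^2-1)^t)
        = ∑ k ∈ Finset.range (t+2), f t (t+k) := by
    intro t _
    set c : ℝ := ((n.choose t : ℕ) : ℝ) * genChoose ((n:ℝ)+t+1/2) t * (4:ℝ)^t * w^t with hc
    have hsplit : ∀ k ∈ Finset.range (t+2),
        f t (t+k) = c * (w^k * ((t.choose k : ℕ) : ℝ))
          + c * (2 * ((if 1 ≤ k then ((t.choose (k-1) : ℕ) : ℝ) else 0) * w^k)) := by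
      intro k _
      rw [hf, hc]
      simp only [show t+k-t = k by omega, show t+k-t-1 = k-1 by omega,
        show (t+1 ≤ t+k) ↔ (1 ≤ k) from by omega]
      rw [pow_add]
      ring
    rw [Finset.sum_congr rfl hsplit, Finset.sum_add_distrib]
    have hA : ∑ k ∈ Finset.range (t+2), c * (w^k * ((t.choose k : ℕ) : ℝ))
        = c * (w+1)^t := by
      rw [← Finset.mul_sum, Finset.sum_range_succ,
          Nat.choose_eq_zero_of_lt (show t < t+1 by omega)]
      rw [binomial_w t w]
      push_cast
      ring
    have hB : ∑ k ∈ Finset.range (t+2), c * (2 * ((if 1 ≤ k then ((t.choose (k-1) : ℕ) : ℝ) else 0) * w^k))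
        = c * (2 * (w * (w+1)^t)) := by
      rw [Finset.sum_range_succ']
      simp only [if_neg (show ¬(1 ≤ 0) by omega), if_pos (show ∀ k:ℕ, 1 ≤ k+1 from fun k => by omega)]
      have : ∀ k ∈ Finset.range (t+1),
          c * (2 * ((if 1 ≤ k+1 then ((t.choose (k+1-1) : ℕ) : ℝ) else 0) * w^(k+1)))
            = (c * 2 * w) * (w^k * ((t.choose k : ℕ) : ℝ)) := by
        intro k _
        rw [if_pos (by omega), show k+1-1 = k by omega, pow_succ]
        ring
      rw [Finset.sum_congr rfl this, ← Finset.mul_sum, binomial_w t w]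
      ring
    rw [hA, hB, hq, hx, mul_pow, mul_pow, hc]
    ring
  rw [Finset.sum_congr rfl step1, box n f]
  have step3 : ∀ t ∈ Finset.range (2*n+2),
      ∑ m ∈ Finset.range (n+1), (if m ≤ t ∧ t ≤ 2*m+1 then f m t else 0)
        = (∑ m ∈ Finset.range (n+1), Fo n t m) * w^t := by
    intro t _
    rw [Finset.sum_mul]
    apply Finset.sum_congr rfl
    intro m _
    unfold Fo
    rw [hf]
    by_cases h1 : m ≤ t
    · by_cases h2 : t ≤ 2*m+1
      · rw [if_pos ⟨h1, h2⟩, if_pos h1]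
        ring
      · rw [if_neg (by tauto), if_pos h1,
            Nat.choose_eq_zero_of_lt (show m < t - m by omega),
            Nat.choose_eq_zero_of_lt (show m < t - m - 1 by omega)]
        simp
    · rw [if_neg (by tauto), if_neg h1, if_neg (show ¬(m+1 ≤ t) by omega)]
      simp
  rw [Finset.sum_congr rfl step3]
  have step4 : ∀ t ∈ Finset.range (2*n+2),
      (∑ m ∈ Finset.range (n+1), Fo n t m) * w^t
        = (((2*n+1).choose t : ℕ) : ℝ) * (((2*n+1+t).choose t : ℕ) : ℝ) * w^t := by
    intro t _
    rw [star_odd n t]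
  rw [Finset.sum_congr rfl step4, show 2*n+1+1 = 2*n+2 by omega]

theorem zernikeR_p_neg_one_eq_legendre (n : ℕ) (x : ℝ) (hx : x ∈ Set.Icc (-1 : ℝ) 1) :
    zernikeR (-1 : ℝ) 0 n |x| = legendreP (2 * n) x ∧
    Real.sign x * zernikeR (-1 : ℝ) 1 n |x| = legendreP (2 * n + 1) x := by
  exact ⟨even_side n x, odd_side n x⟩
end

section
/- Let B denote the closed unit ball in ℝ^{p+2} and let V_{p+2}(1) = π^{p/2+1}/Γ(p/2+2) be its volume. Then for any u ∈ ℝ^{p+2} with ‖u‖ ≤ 2, ∫_{ℝ^{p+2}} 1_B(u−t)·1_B(t) dt = V_{p+2}(1) · B_{1−‖u‖²/4}(p/2 + 3/2, 1/2) / B(p/2 + 3/2, 1/2), i.e., the volume of the intersection of two unit balls at distance ‖u‖ is given by a ratio of incomplete to complete beta functions. -/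
open MeasureTheory

/-- The incomplete beta function `B_x(a,b) = ∫₀ˣ t^(a-1) (1-t)^(b-1) dt`. -/
noncomputable def incBeta (x a b : ℝ) : ℝ :=
  ∫ t in (0 : ℝ)..x, t ^ (a - 1) * (1 - t) ^ (b - 1)

/-- The (complete) beta function `B(a,b) = Γ(a)Γ(b)/Γ(a+b)`. -/
noncomputable def betaFn (a b : ℝ) : ℝ :=
  Real.Gamma a * Real.Gamma b / Real.Gamma (a + b)


open Set intervalIntegral

lemma gfun_contOn (n : ℕ) :
    ContinuousOn (fun t : ℝ => t ^ ((n:ℝ)/2) * (1 - t) ^ (-(1/2) : ℝ)) (Ico 0 1) := by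
  intro t ht
  refine ContinuousWithinAt.mul ?_ ?_
  · exact (Real.continuousAt_rpow_const t _ (Or.inr (by positivity))).continuousWithinAt
  · exact (ContinuousAt.comp
      (Real.continuousAt_rpow_const (1 - t) _ (Or.inl (by simp only [ne_eq]; nlinarith [ht.2])))
      (continuous_const.sub continuous_id).continuousAt).continuousWithinAt

lemma gfun_integrable (n : ℕ) :
    IntervalIntegrable (fun t : ℝ => t ^ ((n:ℝ)/2) * (1 - t) ^ (-(1/2) : ℝ)) volume 0 1 := by
  have h1 : IntervalIntegrable (fun t : ℝ => (1 - t) ^ (-(1/2) : ℝ)) volume 0 1 := by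
    have := ((intervalIntegral.intervalIntegrable_rpow' (a := 0) (b := 1)
      (r := (-(1/2) : ℝ)) (by norm_num)).comp_sub_left 1)
    simpa using this.symm
  refine h1.mono_fun ?_ ?_
  · rw [uIoc_of_le (by norm_num : (0:ℝ) ≤ 1),
      Measure.restrict_congr_set Ioo_ae_eq_Ioc.symm]
    exact ((gfun_contOn n).mono (Ioo_subset_Ico_self.trans (by simp))).aestronglyMeasurable
      measurableSet_Ioo
  · filter_upwards [ae_restrict_mem measurableSet_uIoc] with t ht
    rw [Set.uIoc_of_le (by norm_num : (0:ℝ) ≤ 1)] at ht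
    have ht0 : (0:ℝ) < t := ht.1
    have ht1 : t ≤ 1 := ht.2
    have h2 : (0:ℝ) ≤ (1 - t) ^ (-(1/2) : ℝ) := Real.rpow_nonneg (by linarith) _
    have h3 : t ^ ((n:ℝ)/2) ≤ 1 := Real.rpow_le_one ht0.le ht1 (by positivity)
    have h4 : (0:ℝ) ≤ t ^ ((n:ℝ)/2) := Real.rpow_nonneg ht0.le _
    simp only [Real.norm_eq_abs, abs_of_nonneg h2, abs_of_nonneg (mul_nonneg h4 h2)]
    nlinarith

lemma incBeta_eq_integral (n : ℕ) (c : ℝ) (h0 : 0 ≤ c) (h1 : c ≤ 1) :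
    incBeta (1 - c^2) ((n:ℝ)/2 + 1) (1/2)
      = 2 * ∫ x in c..1, (1 - x^2) ^ ((n:ℝ)/2) := by
  set g : ℝ → ℝ := fun t => t ^ ((n:ℝ)/2) * (1 - t) ^ (-(1/2) : ℝ) with hg
  have hgdef : incBeta (1 - c^2) ((n:ℝ)/2 + 1) (1/2) = ∫ t in (0:ℝ)..(1 - c^2), g t := by
    unfold incBeta
    simp only [hg, show ((n:ℝ)/2 + 1 - 1) = (n:ℝ)/2 by ring,
      show ((1:ℝ)/2 - 1) = -(1/2) by norm_num]
  have hIcc : uIcc c 1 = Icc c 1 := uIcc_of_le h1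
  have hpt : ∀ x : ℝ, 0 < x → -(2*x) • g (1 - x^2) = -(2 * (1 - x^2) ^ ((n:ℝ)/2)) := by
    intro x hxpos
    have h2 : (1:ℝ) - (1 - x^2) = x^2 := by ring
    have h3 : ((x^2 : ℝ)) ^ (-(1/2) : ℝ) = x⁻¹ := by
      rw [show (x^2 : ℝ) = x ^ (2:ℕ) from rfl, ← Real.rpow_natCast x 2,
        ← Real.rpow_mul hxpos.le, show ((2:ℕ):ℝ) * (-(1/2)) = -1 by norm_num,
        Real.rpow_neg_one]
    simp only [hg, h2, h3, smul_eq_mul]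
    field_simp
  have himage : (fun x : ℝ => 1 - x^2) '' (uIcc c 1) ⊆ Icc 0 1 := by
    rw [hIcc]
    rintro t ⟨x, hx, rfl⟩
    simp only [mem_Icc] at hx ⊢
    constructor <;> nlinarith [hx.1, hx.2]
  have key := intervalIntegral.integral_comp_smul_deriv''' (a := c) (b := 1)
      (f := fun x => 1 - x^2) (f' := fun x => -(2*x)) (g := g)
      ?hf ?hff' ?hgc ?hg1 ?hg2
  case hf => exact (continuous_const.sub (continuous_pow 2)).continuousOn
  case hff' =>
    intro x hx
    have : HasDerivAt (fun x : ℝ => 1 - x^2) (-(2*x)) x := by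
      simpa using (hasDerivAt_pow 2 x).const_sub 1
    exact this.hasDerivWithinAt
  case hgc =>
    refine (gfun_contOn n).mono ?_
    rw [min_eq_left h1, max_eq_right h1]
    rintro t ⟨x, hx, rfl⟩
    simp only [mem_Ioo] at hx
    simp only [mem_Ico]
    constructor <;> nlinarith [hx.1, hx.2]
  case hg1 =>
    have : IntegrableOn g (Icc 0 1) := by
      rw [integrableOn_Icc_iff_integrableOn_Ioc, hg]
      have := gfun_integrable n
      rwa [intervalIntegrable_iff, uIoc_of_le (by norm_num : (0:ℝ) ≤ 1)] at this
    exact this.mono_set himage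
  case hg2 =>
    have hφ : Continuous (fun x : ℝ => -(2 * (1 - x^2) ^ ((n:ℝ)/2))) := by
      refine Continuous.neg (Continuous.mul continuous_const ?_)
      rw [continuous_iff_continuousAt]
      intro x
      exact ContinuousAt.comp
        (Real.continuousAt_rpow_const _ _ (Or.inr (by positivity)))
        (continuous_const.sub (continuous_pow 2)).continuousAt
    rw [hIcc]
    have hφInt : IntegrableOn (fun x : ℝ => -(2 * (1 - x^2) ^ ((n:ℝ)/2))) (Icc c 1) volume :=
      hφ.integrableOn_Icc
    have h0ae : ∀ᵐ x : ℝ ∂(volume.restrict (Icc c 1)), x ≠ 0 := by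
      have : (volume : Measure ℝ) ({0} : Set ℝ) = 0 := Real.volume_singleton
      have h := measure_eq_zero_iff_ae_notMem.mp this
      exact (h.filter_mono (ae_mono Measure.restrict_le_self)).mono
        (fun x hx => by simpa using hx)
    refine MeasureTheory.Integrable.congr hφInt ?_
    filter_upwards [ae_restrict_mem measurableSet_Icc, h0ae] with x hx hx0
    have hxpos : 0 < x := lt_of_le_of_ne (le_trans h0 hx.1) (Ne.symm hx0)
    exact (hpt x hxpos).symm
  have e2 : (∫ x in c..1, -(2*x) • g ((fun y : ℝ => 1 - y^2) x))
      = ∫ x in c..1, -(2 * (1-x^2)^((n:ℝ)/2)) := by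
    refine intervalIntegral.integral_congr_ae (Filter.Eventually.of_forall (fun x hx => ?_))
    rw [uIoc_of_le h1] at hx
    exact hpt x (lt_of_le_of_lt h0 hx.1)
  have key' : (∫ u in (1-c^2)..(0:ℝ), g u) = ∫ x in c..1, -(2 * (1-x^2)^((n:ℝ)/2)) := by
    rw [show (0:ℝ) = 1 - 1^2 by norm_num, ← key]
    exact e2
  rw [hgdef, intervalIntegral.integral_symm, key', intervalIntegral.integral_neg,
    neg_neg, intervalIntegral.integral_const_mul]

lemma rpow_nhalf_cont (n : ℕ) : Continuous (fun t : ℝ => t ^ ((n:ℝ)/2)) := by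
  rw [continuous_iff_continuousAt]
  intro x
  exact Real.continuousAt_rpow_const _ _ (Or.inr (by positivity))

lemma min_integral (n : ℕ) (r : ℝ) (hr0 : 0 ≤ r) (hr2 : r ≤ 2) :
    (∫ x in (r-1)..1, (min (1-(x-r)^2) (1-x^2)) ^ ((n:ℝ)/2))
      = 2 * ∫ x in (r/2)..1, (1-x^2) ^ ((n:ℝ)/2) := by
  have hcont : Continuous (fun x : ℝ => (min (1-(x-r)^2) (1-x^2)) ^ ((n:ℝ)/2)) := by
    refine (rpow_nhalf_cont n).comp (Continuous.min ?_ ?_)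
    · exact continuous_const.sub ((continuous_id.sub continuous_const).pow 2)
    · exact continuous_const.sub (continuous_pow 2)
  have hsplit := intervalIntegral.integral_add_adjacent_intervals
    (a := r-1) (b := r/2) (c := 1) (μ := volume)
    (hcont.intervalIntegrable _ _) (hcont.intervalIntegrable _ _)
  have hle1 : r - 1 ≤ r/2 := by linarith
  have hle2 : r/2 ≤ 1 := by linarith
  have left : (∫ x in (r-1)..(r/2), (min (1-(x-r)^2) (1-x^2)) ^ ((n:ℝ)/2))
      = ∫ x in (r/2)..1, (1-x^2) ^ ((n:ℝ)/2) := by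
    have congr1 : (∫ x in (r-1)..(r/2), (min (1-(x-r)^2) (1-x^2)) ^ ((n:ℝ)/2))
        = ∫ x in (r-1)..(r/2), (1-(r-x)^2) ^ ((n:ℝ)/2) := by
      refine intervalIntegral.integral_congr (fun x hx => ?_)
      rw [uIcc_of_le hle1] at hx
      have h1 : min (1-(x-r)^2) (1-x^2) = 1-(x-r)^2 :=
        min_eq_left (by nlinarith [hx.1, hx.2])
      rw [h1, show (x-r)^2 = (r-x)^2 by ring]
    rw [congr1]
    have := intervalIntegral.integral_comp_sub_left (a := r-1) (b := r/2)
      (fun y : ℝ => (1-y^2) ^ ((n:ℝ)/2)) r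
    rw [this, show r - r/2 = r/2 by ring, show r - (r-1) = 1 by ring]
  have right : (∫ x in (r/2)..1, (min (1-(x-r)^2) (1-x^2)) ^ ((n:ℝ)/2))
      = ∫ x in (r/2)..1, (1-x^2) ^ ((n:ℝ)/2) := by
    refine intervalIntegral.integral_congr (fun x hx => ?_)
    rw [uIcc_of_le hle2] at hx
    have h1 : min (1-(x-r)^2) (1-x^2) = 1-x^2 :=
      min_eq_right (by nlinarith [hx.1, hx.2])
    rw [h1]
  rw [← hsplit, left, right]
  ring

lemma volume_sumsq_le (n : ℕ) (s : ℝ) (hs : 0 ≤ s) :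
    volume {y : Fin n → ℝ | ∑ i, y i ^ 2 ≤ s}
      = ENNReal.ofReal ((Real.sqrt Real.pi ^ n / Real.Gamma ((n:ℝ)/2 + 1)) * s ^ ((n:ℝ)/2)) := by
  rcases n with _ | m
  · simp only [Nat.cast_zero, zero_div, Real.rpow_zero, pow_zero, Real.Gamma_one]
    have : {y : Fin 0 → ℝ | ∑ i, y i ^ 2 ≤ s} = Set.univ := by
      ext y; simp [hs]
    rw [this]
    simp [MeasureTheory.volume_pi, Measure.pi_univ]
  · have hpre := ((EuclideanSpace.volume_preserving_symm_measurableEquiv_toLp (Fin (m+1))).symm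
        (MeasurableEquiv.toLp 2 (Fin (m+1) → ℝ)).symm).measure_preimage
      (s := Metric.closedBall 0 (Real.sqrt s))
      measurableSet_closedBall.nullMeasurableSet
    have hset : (MeasurableEquiv.toLp 2 (Fin (m+1) → ℝ)).symm.symm ⁻¹' Metric.closedBall 0 (Real.sqrt s)
        = {y : Fin (m+1) → ℝ | ∑ i, y i ^ 2 ≤ s} := by
      ext y
      simp only [Set.mem_preimage, Metric.mem_closedBall, dist_zero_right, Set.mem_setOf_eq,
        EuclideanSpace.norm_eq]
      rw [MeasurableEquiv.symm_symm, MeasurableEquiv.coe_toLp]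
      simp only [PiLp.toLp_apply, Real.norm_eq_abs, sq_abs]
      rw [Real.sqrt_le_sqrt_iff (by positivity)]
    rw [← hset, hpre, EuclideanSpace.volume_closedBall]
    have h1 : (ENNReal.ofReal (Real.sqrt s)) ^ (Fintype.card (Fin (m+1)))
        = ENNReal.ofReal (s ^ (((m+1:ℕ):ℝ)/2)) := by
      rw [← ENNReal.ofReal_pow (Real.sqrt_nonneg s)]
      congr 1
      rw [Real.sqrt_eq_rpow, ← Real.rpow_natCast (s ^ ((1:ℝ)/2)) (Fintype.card (Fin (m+1))),
        ← Real.rpow_mul hs]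
      congr 1
      simp [Fintype.card_fin]
      ring
    rw [h1, ← ENNReal.ofReal_mul (by positivity)]
    rw [mul_comm]
    congr 2
    simp [Fintype.card_fin]

lemma vol_inter (n : ℕ) (r : ℝ) (hr0 : 0 ≤ r) (hr2 : r ≤ 2) :
    volume (Metric.closedBall (EuclideanSpace.single (0 : Fin (n+1)) r) 1
        ∩ Metric.closedBall 0 1)
      = ENNReal.ofReal ((Real.sqrt Real.pi ^ n / Real.Gamma ((n:ℝ)/2 + 1)) *
          (2 * ∫ x in (r/2)..1, (1-x^2) ^ ((n:ℝ)/2))) := by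
  set S := Metric.closedBall (EuclideanSpace.single (0 : Fin (n+1)) r) 1
      ∩ Metric.closedBall (0 : EuclideanSpace ℝ (Fin (n+1))) 1 with hS
  have hSm : MeasurableSet S :=
    measurableSet_closedBall.inter measurableSet_closedBall
  set e1 := (MeasurableEquiv.toLp 2 (Fin (n+1) → ℝ)).symm with he1
  set e2 := MeasurableEquiv.piFinSuccAbove (fun _ : Fin (n+1) => ℝ) 0 with he2
  have hF : MeasurePreserving (⇑e1.symm ∘ ⇑e2.symm)
      (volume : Measure (ℝ × (Fin n → ℝ))) volume :=
    ((EuclideanSpace.volume_preserving_symm_measurableEquiv_toLp (Fin (n+1))).symm e1).comp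
      ((volume_preserving_piFinSuccAbove (fun _ : Fin (n+1) => ℝ) 0).symm e2)
  have hvol : volume ((⇑e1.symm ∘ ⇑e2.symm) ⁻¹' S) = volume S :=
    hF.measure_preimage hSm.nullMeasurableSet
  set T := {q : ℝ × (Fin n → ℝ) |
      (q.1 - r)^2 + ∑ i, q.2 i ^2 ≤ 1 ∧ q.1^2 + ∑ i, q.2 i^2 ≤ 1} with hT
  have hTset : (⇑e1.symm ∘ ⇑e2.symm) ⁻¹' S = T := by
    ext q
    simp only [Set.mem_preimage, Function.comp_apply, hS, Set.mem_inter_iff,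
      Metric.mem_closedBall, dist_zero_right, dist_eq_norm, sub_zero, hT, Set.mem_setOf_eq]
    have hcoord : ∀ i : Fin (n+1),
        (e1.symm (e2.symm q)) i = Fin.insertNth (α := fun _ : Fin (n+1) => ℝ) 0 q.1 q.2 i := by
      intro i
      rw [he1, MeasurableEquiv.symm_symm, MeasurableEquiv.coe_toLp]
      simp [he2, PiLp.toLp_apply]
    have hnorm1 : ‖e1.symm (e2.symm q) - EuclideanSpace.single (0 : Fin (n+1)) r‖^2
        = (q.1 - r)^2 + ∑ i, q.2 i ^2 := by
      rw [EuclideanSpace.norm_eq, Real.sq_sqrt (by positivity)]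
      simp only [PiLp.sub_apply, hcoord, EuclideanSpace.single_apply, Real.norm_eq_abs, sq_abs]
      rw [Fin.sum_univ_succ]
      simp [Fin.insertNth_apply_same, Fin.succAbove, Fin.insertNth_apply_succAbove,
        Fin.succ_ne_zero]
    have hnorm2 : ‖e1.symm (e2.symm q)‖^2 = q.1^2 + ∑ i, q.2 i ^2 := by
      rw [EuclideanSpace.norm_eq, Real.sq_sqrt (by positivity)]
      simp only [hcoord, Real.norm_eq_abs, sq_abs]
      rw [Fin.sum_univ_succ]
      simp [Fin.insertNth_apply_same, Fin.succAbove, Fin.insertNth_apply_succAbove]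
    constructor
    · rintro ⟨h1, h2⟩
      constructor
      · rw [← hnorm1]; nlinarith [norm_nonneg (e1.symm (e2.symm q) - EuclideanSpace.single (0 : Fin (n+1)) r)]
      · rw [← hnorm2]; nlinarith [norm_nonneg (e1.symm (e2.symm q))]
    · rintro ⟨h1, h2⟩
      rw [← hnorm1] at h1
      rw [← hnorm2] at h2
      constructor
      · nlinarith [norm_nonneg (e1.symm (e2.symm q) - EuclideanSpace.single (0 : Fin (n+1)) r)]
      · nlinarith [norm_nonneg (e1.symm (e2.symm q))]
  rw [← hvol, hTset]
  have hTm : MeasurableSet T := by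
    have hrw : T = {q : ℝ × (Fin n → ℝ) | (q.1 - r)^2 + ∑ i, q.2 i ^2 ≤ 1}
        ∩ {q : ℝ × (Fin n → ℝ) | q.1^2 + ∑ i, q.2 i^2 ≤ 1} := rfl
    rw [hrw]
    have hc1 : Continuous (fun q : ℝ × (Fin n → ℝ) => ∑ i, q.2 i ^ 2) :=
      continuous_finset_sum _ fun i _ => ((continuous_apply i).comp continuous_snd).pow 2
    refine MeasurableSet.inter ?_ ?_
    · exact (isClosed_le (((continuous_fst.sub continuous_const).pow 2).add hc1)
        continuous_const).measurableSet
    · exact (isClosed_le ((continuous_fst.pow 2).add hc1) continuous_const).measurableSet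
  rw [Measure.volume_eq_prod, Measure.prod_apply hTm]
  set m : ℝ → ℝ := fun x => min (1-(x-r)^2) (1-x^2) with hm
  have hslice : ∀ x : ℝ, (Prod.mk x ⁻¹' T) = {y : Fin n → ℝ | ∑ i, y i^2 ≤ m x} := by
    intro x
    ext y
    simp only [hT, Set.mem_preimage, Set.mem_setOf_eq, hm, le_min_iff]
    constructor
    · rintro ⟨h1, h2⟩; exact ⟨by linarith, by linarith⟩
    · rintro ⟨h1, h2⟩; exact ⟨by linarith, by linarith⟩
  set Vn : ℝ := Real.sqrt Real.pi ^ n / Real.Gamma ((n:ℝ)/2 + 1) with hVn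
  have hVnn : 0 ≤ Vn := by
    rw [hVn]
    have : 0 < Real.Gamma ((n:ℝ)/2 + 1) := Real.Gamma_pos_of_pos (by positivity)
    positivity
  have hmIcc : ∀ x ∈ Icc (r-1) 1, 0 ≤ m x := by
    rintro x ⟨hx1, hx2⟩
    rw [hm, le_min_iff]
    constructor <;> nlinarith
  set w : ℝ → ℝ := Set.indicator (Icc (r-1) 1) (fun x => Vn * (m x)^((n:ℝ)/2)) with hw
  have hval : ∀ x : ℝ, volume (Prod.mk x ⁻¹' T) = ENNReal.ofReal (w x) := by
    intro x
    rw [hslice x, hw]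
    by_cases hx : x ∈ Icc (r-1) 1
    · rw [volume_sumsq_le n _ (hmIcc x hx), Set.indicator_of_mem hx]
    · have hmx : m x < 0 := by
        simp only [Set.mem_Icc, not_and_or, not_le] at hx
        rw [hm, min_lt_iff]
        rcases hx with hx | hx
        · left; nlinarith
        · right; nlinarith
      have hempty : {y : Fin n → ℝ | ∑ i, y i^2 ≤ m x} = ∅ := by
        ext y
        simp only [Set.mem_setOf_eq, Set.mem_empty_iff_false, iff_false, not_le]
        calc m x < 0 := hmx
        _ ≤ ∑ i, y i ^2 := by positivity
      rw [hempty, Set.indicator_of_notMem hx]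
      simp
  rw [lintegral_congr hval]
  have hwc : Continuous (fun x : ℝ => Vn * (m x)^((n:ℝ)/2)) := by
    refine continuous_const.mul ((rpow_nhalf_cont n).comp (Continuous.min ?_ ?_))
    · exact continuous_const.sub ((continuous_id.sub continuous_const).pow 2)
    · exact continuous_const.sub (continuous_pow 2)
  have hInt : Integrable w := by
    rw [hw]
    exact (hwc.integrableOn_Icc).integrable_indicator measurableSet_Icc
  have hnn : 0 ≤ᵐ[volume] w := by
    refine Filter.Eventually.of_forall (fun x => ?_)
    rw [hw]
    refine Set.indicator_nonneg (fun y hy => ?_) x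
    exact mul_nonneg hVnn (Real.rpow_nonneg (hmIcc y hy) _)
  rw [← ofReal_integral_eq_lintegral_ofReal hInt hnn]
  congr 1
  rw [hw, MeasureTheory.integral_indicator measurableSet_Icc,
    MeasureTheory.integral_Icc_eq_integral_Ioc,
    ← intervalIntegral.integral_of_le (by linarith : r - 1 ≤ 1),
    intervalIntegral.integral_const_mul]
  rw [hm]
  rw [min_integral n r hr0 hr2]

lemma rotate_vol (n : ℕ) (u : EuclideanSpace ℝ (Fin (n+1))) :
    volume (Metric.closedBall u 1 ∩ Metric.closedBall 0 1)
      = volume (Metric.closedBall (EuclideanSpace.single (0 : Fin (n+1)) ‖u‖) 1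
          ∩ Metric.closedBall 0 1) := by
  by_cases hu : u = 0
  · subst hu
    rw [norm_zero, show (EuclideanSpace.single (0 : Fin (n+1)) (0:ℝ)) = 0 by
      ext i; simp [EuclideanSpace.single_apply]]
  · have hnu : ‖u‖ ≠ 0 := norm_ne_zero_iff.mpr hu
    have horth : Orthonormal ℝ (({0} : Set (Fin (n+1))).restrict fun _ => ‖u‖⁻¹ • u) := by
      constructor
      · intro i
        show ‖‖u‖⁻¹ • u‖ = 1
        rw [norm_smul, norm_inv, norm_norm]
        exact inv_mul_cancel₀ hnu
      · intro i j hij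
        exact absurd (Subtype.ext (show i.1 = j.1 by
          rw [Set.mem_singleton_iff.mp i.2, Set.mem_singleton_iff.mp j.2])) hij
    obtain ⟨b, hb⟩ := horth.exists_orthonormalBasis_extension_of_card_eq
      (by simp [finrank_euclideanSpace])
    have hbu : b.repr u = EuclideanSpace.single (0 : Fin (n+1)) ‖u‖ := by
      have hb0 : b 0 = ‖u‖⁻¹ • u := hb 0 rfl
      have hu' : u = ‖u‖ • b 0 := by
        rw [hb0, smul_smul, mul_inv_cancel₀ hnu, one_smul]
      have h1 : b.repr u = ‖u‖ • EuclideanSpace.single (0 : Fin (n+1)) (1:ℝ) := by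
        conv_lhs => rw [hu']
        rw [_root_.map_smul, b.repr_self]
      rw [h1]
      ext i
      simp [EuclideanSpace.single_apply]
    have hmp := b.measurePreserving_repr
    have hmeas : MeasurableSet (Metric.closedBall (EuclideanSpace.single (0 : Fin (n+1)) ‖u‖) 1
        ∩ Metric.closedBall (0 : EuclideanSpace ℝ (Fin (n+1))) 1) :=
      measurableSet_closedBall.inter measurableSet_closedBall
    have hpre := hmp.measure_preimage hmeas.nullMeasurableSet
    have hset : ⇑b.repr ⁻¹' (Metric.closedBall (EuclideanSpace.single (0 : Fin (n+1)) ‖u‖) 1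
        ∩ Metric.closedBall 0 1) = Metric.closedBall u 1 ∩ Metric.closedBall 0 1 := by
      ext x
      simp only [Set.mem_preimage, Set.mem_inter_iff, Metric.mem_closedBall, dist_eq_norm,
        sub_zero, ← hbu, ← map_sub, b.repr.norm_map]
    rw [← hset, hpre]

theorem ball_intersection_volume (p : ℤ) (hp : -1 ≤ p) (d : ℕ) (hd : (d : ℤ) = p + 2)
    (u : EuclideanSpace ℝ (Fin d)) (hu : ‖u‖ ≤ 2) :
    ∫ t : EuclideanSpace ℝ (Fin d),
        Set.indicator (Metric.closedBall (0 : EuclideanSpace ℝ (Fin d)) 1)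
            (fun _ => (1 : ℝ)) (u - t)
          * Set.indicator (Metric.closedBall (0 : EuclideanSpace ℝ (Fin d)) 1)
            (fun _ => (1 : ℝ)) t
      = Real.pi ^ ((p : ℝ) / 2 + 1) / Real.Gamma ((p : ℝ) / 2 + 2)
          * incBeta (1 - ‖u‖ ^ 2 / 4) ((p : ℝ) / 2 + 3/2) (1/2)
          / betaFn ((p : ℝ) / 2 + 3/2) (1/2) := by
  obtain ⟨n, rfl⟩ : ∃ n, d = n + 1 := ⟨d - 1, by omega⟩
  have hp' : (p : ℝ) = (n : ℝ) - 1 := by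
    have : (p : ℤ) = (n : ℤ) - 1 := by omega
    exact_mod_cast congrArg (Int.cast : ℤ → ℝ) this
  set r := ‖u‖ with hr
  have hr0 : 0 ≤ r := norm_nonneg u
  have hSm : MeasurableSet (Metric.closedBall u 1
      ∩ Metric.closedBall (0 : EuclideanSpace ℝ (Fin (n+1))) 1) :=
    measurableSet_closedBall.inter measurableSet_closedBall
  have hL : (∫ t : EuclideanSpace ℝ (Fin (n+1)),
        Set.indicator (Metric.closedBall (0 : EuclideanSpace ℝ (Fin (n+1))) 1)
            (fun _ => (1 : ℝ)) (u - t)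
          * Set.indicator (Metric.closedBall (0 : EuclideanSpace ℝ (Fin (n+1))) 1)
            (fun _ => (1 : ℝ)) t)
      = (volume (Metric.closedBall u 1 ∩ Metric.closedBall 0 1)).toReal := by
    rw [← measureReal_def, ← MeasureTheory.integral_indicator_one hSm]
    refine MeasureTheory.integral_congr_ae (Filter.Eventually.of_forall (fun t => ?_))
    have hmem : (u - t ∈ Metric.closedBall (0 : EuclideanSpace ℝ (Fin (n+1))) 1)
        ↔ t ∈ Metric.closedBall u 1 := by
      simp [Metric.mem_closedBall, dist_eq_norm, norm_sub_rev]
    by_cases h1 : t ∈ Metric.closedBall u 1 <;>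
      by_cases h2 : t ∈ Metric.closedBall (0 : EuclideanSpace ℝ (Fin (n+1))) 1 <;>
      simp [Set.indicator_apply, hmem, h1, h2]
  rw [hL, rotate_vol n u, ← hr, vol_inter n r hr0 hu]
  have hIpos : 0 ≤ ∫ x in (r/2)..1, (1-x^2) ^ ((n:ℝ)/2) := by
    refine intervalIntegral.integral_nonneg (by linarith) (fun x hx => ?_)
    exact Real.rpow_nonneg (by nlinarith [hx.1, hx.2]) _
  have hGpos1 : 0 < Real.Gamma ((n:ℝ)/2 + 1) := Real.Gamma_pos_of_pos (by positivity)
  have hVnn : 0 ≤ Real.sqrt Real.pi ^ n / Real.Gamma ((n:ℝ)/2 + 1) := by positivity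
  rw [ENNReal.toReal_ofReal (by positivity)]
  have hc : incBeta (1 - r^2/4) ((p:ℝ)/2 + 3/2) (1/2)
      = 2 * ∫ x in (r/2)..1, (1-x^2)^((n:ℝ)/2) := by
    rw [show (1 - r^2/4) = 1 - (r/2)^2 by ring,
      show (p:ℝ)/2 + 3/2 = (n:ℝ)/2 + 1 by rw [hp']; ring]
    exact incBeta_eq_integral n (r/2) (by linarith) (by linarith)
  rw [hc]
  -- final algebra
  have hGpos2 : 0 < Real.Gamma ((n:ℝ)/2 + 3/2) := Real.Gamma_pos_of_pos (by positivity)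
  have hsq : Real.sqrt Real.pi ^ n = Real.pi ^ ((n:ℝ)/2) := by
    rw [Real.sqrt_eq_rpow, ← Real.rpow_natCast (Real.pi ^ ((1:ℝ)/2)) n,
      ← Real.rpow_mul Real.pi_pos.le]
    congr 1
    push_cast
    ring
  have e1 : (p:ℝ)/2 + 1 = (n:ℝ)/2 + 1/2 := by rw [hp']; ring
  have e2 : (p:ℝ)/2 + 2 = (n:ℝ)/2 + 3/2 := by rw [hp']; ring
  have e3 : (p:ℝ)/2 + 3/2 = (n:ℝ)/2 + 1 := by rw [hp']; ring
  rw [e1, e2, e3, betaFn]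
  have e4 : (n:ℝ)/2 + 1 + 1/2 = (n:ℝ)/2 + 3/2 := by ring
  rw [e4, Real.Gamma_one_half_eq, hsq]
  have e5 : Real.pi ^ ((n:ℝ)/2 + 1/2) = Real.pi ^ ((n:ℝ)/2) * Real.sqrt Real.pi := by
    rw [Real.rpow_add Real.pi_pos, Real.sqrt_eq_rpow]
  have hsqrtpos : 0 < Real.sqrt Real.pi := Real.sqrt_pos.mpr Real.pi_pos
  have h1 := hGpos1.ne'
  have h2 := hGpos2.ne'
  have h3 := hsqrtpos.ne'
  rw [e5]
  field_simp
end
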